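/- arXiv:2306.16775 — 3 statements merged into one kernel-verified Lean document; each statement's English description precedes it below -/
import Mathlib

section
/- Let G be a finite simple graph with at least one edge, and let (e_1,…,e_m) be an arbitrary enumeration of all edges of G. For each i, let G_L[i] be the spanning subgraph of G with edge set {e_i,…,e_m}, and let N_i be the set of common neighbors in G_L[i] of the two endpoints of e_i. Then the clique number satisfies ω(G) = max_{1 ≤ i ≤ m} ( 2 + ω(G[N_i]) ), where G[N_i] denotes the subgraph of G induced by N_i. -/
/-!
Every clique `K` of `G` with at least two vertices contains a first edge `e_i` of the
enumeration. No edge inside `K` lies among `e_1, …, e_{i-1}`, so `K` minus the endpoints of `e_i`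
is a clique in the common neighbourhood `N_i`, giving `|K| ≤ 2 + ω(G[N_i])`. Conversely, a clique
in `N_i` together with the two endpoints of `e_i` is a clique of `G`.
-/

/-- The clique number `ω(G)` of a graph `G`: the largest size of a set of pairwise
adjacent vertices (0 for a graph with no vertices). -/
noncomputable def cliqueNum' {V : Type*} (G : SimpleGraph V) : ℕ :=
  sSup {n | ∃ s : Finset V, G.IsNClique n s}

/-- The clique number `ω(G[N])` of the subgraph of `G` induced by the vertex set `N`. -/
noncomputable def cliqueNumOn {V : Type*} (G : SimpleGraph V) (N : Set V) : ℕ :=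
  sSup {n | ∃ s : Finset V, ↑s ⊆ N ∧ G.IsNClique n s}

theorem List.exists_get_forall_take_not {α : Type*} {p : α → Prop} {L : List α}
    (h : ∃ a ∈ L, p a) : ∃ i : Fin L.length, p (L.get i) ∧ ∀ a ∈ L.take i, ¬ p a := by
  classical
  refine ⟨⟨L.findIdx (p ·), List.findIdx_lt_length_of_exists (by simpa using h)⟩,
    of_decide_eq_true (List.findIdx_getElem (p := fun a => decide (p a))), ?_⟩
  intro a ha
  obtain ⟨k, hk, rfl⟩ := List.mem_iff_getElem.1 ha
  simp only [List.length_take, lt_min_iff] at hk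
  simpa using List.not_of_lt_findIdx hk.1

namespace SimpleGraph

variable {V : Type*} {G H : SimpleGraph V}

theorem cliqueNum'_eq_cliqueNum (G : SimpleGraph V) : cliqueNum' G = G.cliqueNum := rfl

theorem IsNClique.le_cliqueNumOn [Finite V] {N : Set V} {n : ℕ} {s : Finset V}
    (hsN : ↑s ⊆ N) (hs : G.IsNClique n s) : n ≤ cliqueNumOn G N := by
  have := Fintype.ofFinite V
  exact le_csSup ⟨Fintype.card V, fun _ ⟨t, _, ht⟩ => ht.card_eq ▸ t.card_le_univ⟩ ⟨s, hsN, hs⟩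

theorem exists_isNClique_cliqueNumOn (G : SimpleGraph V) (N : Set V) :
    ∃ s : Finset V, ↑s ⊆ N ∧ G.IsNClique (cliqueNumOn G N) s := by
  set sizes := {n | ∃ s : Finset V, ↑s ⊆ N ∧ G.IsNClique n s}
  by_cases h : BddAbove sizes
  · exact Nat.sSup_mem (s := sizes) ⟨0, ∅, by simp⟩ h
  -- an unbounded set of naturals has junk `sSup` equal to `0`, realised by `∅`
  · simp [cliqueNumOn, sizes, h]

theorem two_le_cliqueNum [Finite V] (h : G.edgeSet.Nonempty) : 2 ≤ G.cliqueNum := by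
  classical
  obtain ⟨e, he⟩ := h
  induction e using Sym2.ind with
  | _ u v =>
    have huv : G.Adj u v := he
    calc 2 = ({u, v} : Finset V).card := (Finset.card_pair huv.ne).symm
      _ ≤ G.cliqueNum :=
        IsClique.card_le_cliqueNum (tc := by simpa using isClique_pair.2 fun _ => huv)

theorem two_add_cliqueNumOn_le_cliqueNum [Finite V] (hH : H ≤ G) {e : Sym2 V}
    (he : e ∈ G.edgeSet) : 2 + cliqueNumOn G {w | ∀ x ∈ e, H.Adj x w} ≤ G.cliqueNum := by
  classical
  induction e using Sym2.ind with
  | _ u v =>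
    have huv : G.Adj u v := he
    obtain ⟨t, htN, ht⟩ := G.exists_isNClique_cliqueNumOn {w | ∀ x ∈ s(u, v), H.Adj x w}
    have hadj (x : V) (hx : x ∈ s(u, v)) (w : V) (hw : w ∈ t) : G.Adj x w := hH (htN hw x hx)
    have hclique : G.IsNClique (cliqueNumOn G _ + 1 + 1) (insert u (insert v t)) :=
      (ht.insert (hadj v (Sym2.mem_mk_right u v))).insert fun w hw => by
        rcases Finset.mem_insert.1 hw with rfl | hw
        exacts [huv, hadj u (Sym2.mem_mk_left u v) w hw]
    have := hclique.card_eq ▸ hclique.isClique.card_le_cliqueNum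
    omega

theorem IsNClique.le_two_add_cliqueNumOn [Finite V] {n : ℕ} {s : Finset V} (hs : G.IsNClique n s)
    {e : Sym2 V} (he : e ∈ G.edgeSet) (hes : ∀ x ∈ e, x ∈ s)
    (hH : ∀ a ∈ s, ∀ b ∈ s, G.Adj a b → H.Adj a b) :
    n ≤ 2 + cliqueNumOn G {w | ∀ x ∈ e, H.Adj x w} := by
  classical
  induction e using Sym2.ind with
  | _ u v =>
    have huv : G.Adj u v := he
    have hu := hes u (Sym2.mem_mk_left u v)
    have hv := hes v (Sym2.mem_mk_right u v)
    have hrest := (hs.erase_of_mem hu).erase_of_mem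
      (Finset.mem_erase.2 ⟨huv.ne.symm, hv⟩)
    have hrestN : ↑((s.erase u).erase v) ⊆ {w | ∀ x ∈ s(u, v), H.Adj x w} := by
      intro w hw x hx
      simp only [Finset.coe_erase, Set.mem_sdiff, Set.mem_singleton_iff, Finset.mem_coe] at hw
      obtain ⟨⟨hws, hwu⟩, hwv⟩ := hw
      rcases Sym2.mem_iff.1 hx with rfl | rfl
      · exact hH _ hu _ hws (hs.isClique hu hws (Ne.symm hwu))
      · exact hH _ hv _ hws (hs.isClique hv hws (Ne.symm hwv))
    have := hrest.le_cliqueNumOn hrestN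
    have := hs.card_eq ▸ Finset.one_lt_card.2 ⟨u, hu, v, hv, huv.ne⟩
    omega

end SimpleGraph

open SimpleGraph in
theorem cliqueNum_eq_sup_of_edge_enum_general {V : Type*} [Fintype V]
    (G : SimpleGraph V) (hne : G.edgeSet.Nonempty)
    (L : List (Sym2 V))
    (hmem : ∀ e, e ∈ L ↔ e ∈ G.edgeSet) :
    cliqueNum' G =
      (Finset.univ : Finset (Fin L.length)).sup fun i =>
        2 + cliqueNumOn G
          {w | ∀ x ∈ L.get i, (G.deleteEdges {e | e ∈ L.take i.1}).Adj x w} := by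
  rw [cliqueNum'_eq_cliqueNum]
  refine le_antisymm ?_ <| Finset.sup_le fun i _ =>
    two_add_cliqueNumOn_le_cliqueNum (G.deleteEdges_le _) ((hmem _).1 (L.get_mem i))
  obtain ⟨s, hs⟩ := G.exists_isNClique_cliqueNum
  obtain ⟨a, ha, b, hb, hab⟩ :=
    Finset.one_lt_card.1 (hs.card_eq ▸ two_le_cliqueNum hne : 1 < s.card)
  obtain ⟨i, hi, hfirst⟩ := L.exists_get_forall_take_not (p := fun e => ∀ x ∈ e, x ∈ s)
    ⟨s(a, b), (hmem _).2 (hs.isClique ha hb hab), by simp [ha, hb]⟩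
  refine Finset.le_sup_of_le (Finset.mem_univ i) <|
    hs.le_two_add_cliqueNumOn ((hmem _).1 (L.get_mem i)) hi fun x hx y hy hxy => ?_
  exact G.deleteEdges_adj.2 ⟨hxy, fun hL => hfirst _ hL (by simp [hx, hy])⟩

/-- If `G` has at least one edge and `L = (e_1, …, e_m)` enumerates all edges of `G`,
then letting `G_L[i]` be the spanning subgraph with edge set `{e_i, …, e_m}` and `N_i`
the common neighbors in `G_L[i]` of the endpoints of `e_i`, we have
`ω(G) = max_i (2 + ω(G[N_i]))`. -/
theorem cliqueNum_eq_sup_of_edge_enum {V : Type*} [Fintype V] [DecidableEq V]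
    (G : SimpleGraph V) (hne : G.edgeSet.Nonempty)
    (L : List (Sym2 V)) (hnd : L.Nodup)
    (hmem : ∀ e, e ∈ L ↔ e ∈ G.edgeSet) :
    cliqueNum' G =
      (Finset.univ : Finset (Fin L.length)).sup fun i =>
        2 + cliqueNumOn G
          {w | ∀ x ∈ L.get i, (G.deleteEdges {e | e ∈ L.take i.1}).Adj x w} :=
  cliqueNum_eq_sup_of_edge_enum_general G hne L hmem
end

section
/- Let V be a finite set, p : V → ℍ² a family of points in the hyperbolic plane, R ≥ 0, and G the hyperbolic unit disk graph on V with threshold R. If (e_1,…,e_m) is any enumeration of all edges of G sorted in non-increasing order of the hyperbolic lengths d(p(u), p(v)) of their endpoints, then (e_1,…,e_m) is a co-bipartite neighborhood edge elimination ordering (CNEEO) of G. -/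
/-!
Let `uv` be the edge being eliminated. Edges that are still present are no longer than `uv`, so
every remaining common neighbour of `u` and `v` lies in the lens `B(u, d(u,v)) ∩ B(v, d(u,v))`.
The geodesic through `u` and `v` cuts this lens into two halves, and each half has diameter at
most `d(u,v) ≤ R`, so the two halves give the two cliques. To bound the diameter of a half we move
`u` to `i` and `v` to `t i` with `t ≥ 1` by an element of `SL(2, ℝ)`; the geodesic becomes the
imaginary axis, and comparing `cosh` of distances turns the claim into a polynomial inequality.
-/

/-- `L` is a co-bipartite neighborhood edge elimination ordering (CNEEO) of `G`:
an ordering of all edges of `G` such that for every `i`, letting `G_L[i]` be the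
spanning subgraph with edge set `{e_i, …, e_m}` and `N_i` the set of common neighbors
in `G_L[i]` of the two endpoints of `e_i`, the set `N_i` can be partitioned into two
(possibly empty) cliques of `G`. -/
def IsCNEEO {V : Type*} (G : SimpleGraph V) (L : List (Sym2 V)) : Prop :=
  L.Nodup ∧ (∀ e, e ∈ L ↔ e ∈ G.edgeSet) ∧
  ∀ i : Fin L.length, ∃ A B : Set V,
    {w | ∀ x ∈ L.get i, (G.deleteEdges {e | e ∈ L.take i.1}).Adj x w} = A ∪ B ∧
    Disjoint A B ∧ G.IsClique A ∧ G.IsClique B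

/-- The hyperbolic length of an edge, i.e. the hyperbolic distance between the points
assigned to its two endpoints. -/
noncomputable def edgeLen {V : Type*} (p : V → UpperHalfPlane) : Sym2 V → ℝ :=
  Sym2.lift ⟨fun u v => dist (p u) (p v), fun u v => dist_comm (p u) (p v)⟩

open Real
open scoped UpperHalfPlane MatrixGroups

lemma sub_sq_le_of_sq_le_of_mul_nonneg {a b : ℝ} (hab : 0 ≤ a * b) (h : b ^ 2 ≤ a ^ 2) :
    (a - b) ^ 2 ≤ a ^ 2 := by
  have : |b| * |b| ≤ |a| * |b| := mul_le_mul_of_nonneg_right (sq_le_sq.1 h) (abs_nonneg b)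
  rw [abs_mul_abs_self, ← abs_mul, abs_of_nonneg hab] at this
  nlinarith

/- For `t > 0` and `y > 0`, the inequalities `t * (x ^ 2 + (y - 1) ^ 2) ≤ y * (t - 1) ^ 2` and
`x ^ 2 + (y - t) ^ 2 ≤ y * (t - 1) ^ 2` say that `x + y i` lies within hyperbolic distance
`d(i, t i)` of `i` and of `t i` respectively. -/
section HalfLens

variable {t x y : ℝ}

lemma one_le_of_sq_add_sq_sub_le (ht : 1 ≤ t) (h : x ^ 2 + (y - t) ^ 2 ≤ y * (t - 1) ^ 2) :
    1 ≤ y := by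
  by_contra! hy
  nlinarith [mul_pos (sub_pos.2 hy) (by nlinarith : (0:ℝ) < t ^ 2 - y), sq_nonneg x]

lemma le_of_sq_add_sq_sub_one_le (ht : 1 ≤ t) (h : t * (x ^ 2 + (y - 1) ^ 2) ≤ y * (t - 1) ^ 2) :
    y ≤ t := by
  by_contra! hy
  nlinarith [mul_pos (sub_pos.2 hy) (by nlinarith : (0:ℝ) < t * y - 1),
    mul_nonneg (by linarith : (0:ℝ) ≤ t) (sq_nonneg x)]

lemma mul_sq_le_of_mem_half_lens {y' : ℝ} (ht : 1 ≤ t)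
    (h : t * (x ^ 2 + (y - 1) ^ 2) ≤ y * (t - 1) ^ 2) (h' : x ^ 2 + (y - t) ^ 2 ≤ y * (t - 1) ^ 2)
    (hy' : 1 ≤ y') (hy't : y' ≤ t) :
    t * x ^ 2 ≤ (t * y - y') * (t * y' - y) := by
  -- The right-hand side is concave in `y'`, and `h`, `h'` are the cases `y' = 1`, `y' = t`.
  obtain rfl | ht := ht.eq_or_lt
  · obtain rfl : y' = 1 := le_antisymm hy't hy'
    linarith
  have : 0 ≤ (t - 1) * ((t * y - y') * (t * y' - y) - t * x ^ 2) := by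
    nlinarith [mul_nonneg (sub_nonneg.2 hy') (sub_nonneg.2 hy't),
      mul_nonneg (sub_nonneg.2 hy') (sub_nonneg.2 h'), mul_nonneg (sub_nonneg.2 hy't) (sub_nonneg.2 h)]
  linarith [nonneg_of_mul_nonneg_right this (sub_pos.2 ht)]

lemma half_lens_ineq {x₁ y₁ x₂ y₂ : ℝ} (ht : 1 ≤ t) (hx : 0 ≤ x₁ * x₂)
    (h₁ : t * (x₁ ^ 2 + (y₁ - 1) ^ 2) ≤ y₁ * (t - 1) ^ 2)
    (h₁' : x₁ ^ 2 + (y₁ - t) ^ 2 ≤ y₁ * (t - 1) ^ 2)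
    (h₂ : t * (x₂ ^ 2 + (y₂ - 1) ^ 2) ≤ y₂ * (t - 1) ^ 2)
    (h₂' : x₂ ^ 2 + (y₂ - t) ^ 2 ≤ y₂ * (t - 1) ^ 2) :
    t * ((x₁ - x₂) ^ 2 + (y₁ - y₂) ^ 2) ≤ y₁ * y₂ * (t - 1) ^ 2 := by
  have ht₀ : 0 ≤ t := by linarith
  suffices t * (x₁ - x₂) ^ 2 ≤ (t * y₁ - y₂) * (t * y₂ - y₁) by linarith
  rcases le_total (x₂ ^ 2) (x₁ ^ 2) with hx₁ | hx₂
  · calc t * (x₁ - x₂) ^ 2 ≤ t * x₁ ^ 2 :=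
          mul_le_mul_of_nonneg_left (sub_sq_le_of_sq_le_of_mul_nonneg hx hx₁) ht₀
      _ ≤ _ := mul_sq_le_of_mem_half_lens ht h₁ h₁' (one_le_of_sq_add_sq_sub_le ht h₂')
          (le_of_sq_add_sq_sub_one_le ht h₂)
  · calc t * (x₁ - x₂) ^ 2 = t * (x₂ - x₁) ^ 2 := by ring
      _ ≤ t * x₂ ^ 2 :=
          mul_le_mul_of_nonneg_left (sub_sq_le_of_sq_le_of_mul_nonneg (by linarith) hx₂) ht₀
      _ ≤ (t * y₂ - y₁) * (t * y₁ - y₂) := mul_sq_le_of_mem_half_lens ht h₂ h₂'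
          (one_le_of_sq_add_sq_sub_le ht h₁') (le_of_sq_add_sq_sub_one_le ht h₁)
      _ = _ := by ring

end HalfLens

lemma exists_sin_mul_add_cos_mul_eq_zero (a b : ℝ) : ∃ φ : ℝ, sin φ * a + cos φ * b = 0 := by
  set w : ℂ := ⟨a, -b⟩
  refine ⟨Complex.arg w, ?_⟩
  rcases eq_or_ne w 0 with hw | hw
  · have ha : a = 0 := congrArg Complex.re hw
    have hb : b = 0 := neg_eq_zero.1 (congrArg Complex.im hw)
    simp [ha, hb]
  · have hc := Complex.norm_mul_cos_arg w
    have hs := Complex.norm_mul_sin_arg w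
    refine (mul_eq_zero.1 ?_).resolve_left (norm_ne_zero_iff.2 hw)
    linear_combination a * hs + b * hc

namespace UpperHalfPlane

noncomputable def rotationSL (θ : ℝ) : SL(2, ℝ) :=
  ⟨!![cos θ, -sin θ; sin θ, cos θ], by simp [Matrix.det_fin_two, ← sq]⟩

lemma coe_rotationSL_smul (θ : ℝ) (z : ℍ) :
    ((rotationSL θ • z : ℍ) : ℂ) = (cos θ * z - sin θ) / (sin θ * z + cos θ) := by
  rw [coe_specialLinearGroup_apply]
  simp [rotationSL, sub_eq_add_neg]

lemma sin_mul_add_cos_ne_zero (θ : ℝ) (z : ℍ) : (sin θ : ℂ) * z + cos θ ≠ 0 := by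
  refine linear_ne_zero (cd := ![sin θ, cos θ]) z fun h => ?_
  have hs : sin θ = 0 := congrFun h 0
  have hc : cos θ = 0 := congrFun h 1
  simpa [hs, hc] using sin_sq_add_cos_sq θ

lemma rotationSL_smul_I (θ : ℝ) : rotationSL θ • I = I := by
  ext
  rw [coe_rotationSL_smul, div_eq_iff (sin_mul_add_cos_ne_zero θ I), coe_I]
  linear_combination (-(sin θ : ℂ)) * Complex.I_sq

lemma coe_rotationSL_add_pi_div_two_smul (θ : ℝ) (z : ℍ) :
    ((rotationSL (θ + π / 2) • z : ℍ) : ℂ) = -((rotationSL θ • z : ℍ) : ℂ)⁻¹ := by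
  rw [coe_rotationSL_smul, coe_rotationSL_smul, cos_add_pi_div_two, sin_add_pi_div_two,
    inv_div, ← neg_div]
  push_cast
  ring

lemma re_im_rotationSL_add_pi_div_two_smul {θ : ℝ} {z : ℍ} (h : (rotationSL θ • z).re = 0) :
    (rotationSL (θ + π / 2) • z).re = 0 ∧
      (rotationSL (θ + π / 2) • z).im = (rotationSL θ • z).im⁻¹ := by
  rw [← coe_re, ← coe_im, ← coe_im, coe_rotationSL_add_pi_div_two_smul, Complex.neg_re,
    Complex.neg_im, Complex.inv_re, Complex.inv_im, Complex.normSq_apply, coe_re, h]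
  refine ⟨by simp, ?_⟩
  rw [neg_div, neg_neg, zero_mul, zero_add]
  exact div_mul_cancel_left₀ (im_pos _).ne' _

lemma exists_re_rotationSL_smul_eq_zero (z : ℍ) : ∃ θ, (rotationSL θ • z).re = 0 := by
  obtain ⟨φ, hφ⟩ := exists_sin_mul_add_cos_mul_eq_zero ((z.re ^ 2 + z.im ^ 2 - 1) / 2) z.re
  refine ⟨φ / 2, ?_⟩
  rw [show φ = 2 * (φ / 2) by ring, sin_two_mul, cos_two_mul'] at hφ
  rw [← coe_re, coe_rotationSL_smul, Complex.div_re, ← add_div, div_eq_zero_iff]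
  left
  simp only [Complex.add_re, Complex.sub_re, Complex.mul_re, Complex.add_im, Complex.sub_im,
    Complex.mul_im, Complex.ofReal_re, Complex.ofReal_im, coe_re, coe_im]
  linear_combination hφ

lemma exists_smul_eq_I_and_smul_re_eq_zero (u v : ℍ) :
    ∃ g : SL(2, ℝ), g • u = I ∧ (g • v).re = 0 ∧ 1 ≤ (g • v).im := by
  set g₀ := (toSL2R u)⁻¹
  have hg₀ : g₀ • u = I := by rw [inv_smul_eq_iff, toSL2R_smul_I]
  obtain ⟨θ, hθ⟩ := exists_re_rotationSL_smul_eq_zero (g₀ • v)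
  rcases le_or_gt 1 (rotationSL θ • g₀ • v).im with h | h
  · exact ⟨rotationSL θ * g₀, by rw [mul_smul, hg₀, rotationSL_smul_I], by rwa [mul_smul],
      by rwa [mul_smul]⟩
  · obtain ⟨hre, him⟩ := re_im_rotationSL_add_pi_div_two_smul hθ
    refine ⟨rotationSL (θ + π / 2) * g₀, by rw [mul_smul, hg₀, rotationSL_smul_I],
      by rwa [mul_smul], ?_⟩
    rw [mul_smul, him]
    exact (one_le_inv₀ (im_pos _)).2 h.le

lemma sq_dist_coe (z w : ℍ) : dist (z : ℂ) w ^ 2 = (z.re - w.re) ^ 2 + (z.im - w.im) ^ 2 := by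
  rw [Complex.dist_eq_re_im, sq_sqrt (by positivity)]
  rfl

lemma dist_le_dist_iff (z w z' w' : ℍ) :
    dist z w ≤ dist z' w' ↔
      ((z.re - w.re) ^ 2 + (z.im - w.im) ^ 2) / (z.im * w.im) ≤
        ((z'.re - w'.re) ^ 2 + (z'.im - w'.im) ^ 2) / (z'.im * w'.im) := by
  rw [← cosh_strictMonoOn.le_iff_le dist_nonneg dist_nonneg, cosh_dist, cosh_dist, sq_dist_coe,
    sq_dist_coe, add_le_add_iff_left, mul_assoc, mul_assoc, div_mul_eq_div_div_swap (b := 2),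
    div_mul_eq_div_div_swap (b := 2), div_le_div_iff_of_pos_right two_pos]

lemma dist_le_dist_I_of_mem_half_lens {v w₁ w₂ : ℍ} (hv_re : v.re = 0) (hv_im : 1 ≤ v.im)
    (hw : 0 ≤ w₁.re * w₂.re) (h₁ : dist I w₁ ≤ dist I v) (h₁' : dist v w₁ ≤ dist I v)
    (h₂ : dist I w₂ ≤ dist I v) (h₂' : dist v w₂ ≤ dist I v) :
    dist w₁ w₂ ≤ dist I v := by
  simp only [dist_le_dist_iff, I_re, I_im, hv_re] at h₁ h₁' h₂ h₂' ⊢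
  rw [div_le_div_iff₀ (by positivity) (by positivity)] at h₁ h₁' h₂ h₂' ⊢
  have := half_lens_ineq (x₁ := w₁.re) (y₁ := w₁.im) (x₂ := w₂.re) (y₂ := w₂.im) hv_im hw
    (by linarith) (by nlinarith) (by linarith) (by nlinarith)
  linarith

lemma exists_forall_dist_le_of_mem_lens (u v : ℍ) :
    ∃ s : Set ℍ, ∀ w₁ w₂, (w₁ ∈ s ↔ w₂ ∈ s) →
      dist u w₁ ≤ dist u v → dist v w₁ ≤ dist u v →
      dist u w₂ ≤ dist u v → dist v w₂ ≤ dist u v → dist w₁ w₂ ≤ dist u v := by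
  obtain ⟨g, hu, hv_re, hv_im⟩ := exists_smul_eq_I_and_smul_re_eq_zero u v
  refine ⟨{w | 0 ≤ (g • w).re}, fun w₁ w₂ hside h₁ h₁' h₂ h₂' => ?_⟩
  have hw : 0 ≤ (g • w₁).re * (g • w₂).re := by
    rcases le_or_gt 0 (g • w₁).re with h | h
    · exact mul_nonneg h (hside.1 h)
    · exact mul_nonneg_of_nonpos_of_nonpos h.le (not_le.1 (mt hside.2 h.not_ge)).le
  simp only [← dist_smul g u, ← dist_smul g v, ← dist_smul g w₁, hu] at h₁ h₁' h₂ h₂' ⊢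
  exact dist_le_dist_I_of_mem_half_lens hv_re hv_im hw h₁ h₁' h₂ h₂'

end UpperHalfPlane

lemma List.Pairwise.le_of_mem_of_notMem_take {α β : Type*} [Preorder β] {l : List α}
    {f : α → β} (h : l.Pairwise fun a b => f b ≤ f a) (i : Fin l.length) {a : α} (ha : a ∈ l)
    (hai : a ∉ l.take i) : f a ≤ f (l.get i) := by
  rw [← List.take_append_drop i l, List.mem_append] at ha
  have hdrop := h.drop (i := i)
  rw [List.drop_eq_getElem_cons i.2, List.pairwise_cons] at hdrop
  rw [List.drop_eq_getElem_cons i.2, List.mem_cons] at ha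
  rcases ha.resolve_left hai with rfl | ha
  · exact le_rfl
  · exact hdrop.1 a ha

namespace SimpleGraph

variable {V : Type*} {G : SimpleGraph V}

lemma le_of_mem_edgeSet_deleteEdges_take {β : Type*} [Preorder β] {L : List (Sym2 V)}
    {f : Sym2 V → β} (hmem : ∀ e, e ∈ L ↔ e ∈ G.edgeSet)
    (hsorted : L.Pairwise fun e e' => f e' ≤ f e) (i : Fin L.length) {e : Sym2 V}
    (he : e ∈ (G.deleteEdges {e | e ∈ L.take i}).edgeSet) : f e ≤ f (L.get i) := by
  rw [edgeSet_deleteEdges] at he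
  exact hsorted.le_of_mem_of_notMem_take i ((hmem e).2 he.1) he.2

lemma exists_isClique_union_of_adj {N s : Set V}
    (h : ∀ x ∈ N, ∀ y ∈ N, x ≠ y → (x ∈ s ↔ y ∈ s) → G.Adj x y) :
    ∃ A B : Set V, N = A ∪ B ∧ Disjoint A B ∧ G.IsClique A ∧ G.IsClique B :=
  ⟨N ∩ s, N \ s, (Set.inter_union_sdiff N s).symm, Set.disjoint_sdiff_inter.symm,
    fun x hx y hy hxy => h x hx.1 y hy.1 hxy (iff_of_true hx.2 hy.2),
    fun x hx y hy hxy => h x hx.1 y hy.1 hxy (iff_of_false hx.2 hy.2)⟩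

end SimpleGraph

theorem sorted_edges_isCNEEO_general {V : Type*}
    (p : V → UpperHalfPlane) (R : ℝ)
    (G : SimpleGraph V)
    (hG : ∀ u v, G.Adj u v ↔ u ≠ v ∧ dist (p u) (p v) ≤ R)
    (L : List (Sym2 V)) (hnd : L.Nodup)
    (hmem : ∀ e, e ∈ L ↔ e ∈ G.edgeSet)
    (hsorted : L.Pairwise fun e f => edgeLen p f ≤ edgeLen p e) :
    IsCNEEO G L := by
  refine ⟨hnd, hmem, fun i => ?_⟩
  set H := G.deleteEdges {e | e ∈ L.take i}
  obtain ⟨⟨u, v⟩, he⟩ := Quot.exists_rep (L.get i)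
  have huv : dist (p u) (p v) ≤ R := ((hG u v).1 ((hmem _).1 (he ▸ L.get_mem i))).2
  have hshort : ∀ {a b}, H.Adj a b → dist (p a) (p b) ≤ dist (p u) (p v) := fun hab => by
    have := SimpleGraph.le_of_mem_edgeSet_deleteEdges_take hmem hsorted i (H.mem_edgeSet.2 hab)
    rwa [← he] at this
  obtain ⟨s, hs⟩ := UpperHalfPlane.exists_forall_dist_le_of_mem_lens (p u) (p v)
  refine SimpleGraph.exists_isClique_union_of_adj (s := p ⁻¹' s)
    fun x hx y hy hxy hside => (hG x y).2 ⟨hxy, le_trans ?_ huv⟩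
  rw [← he] at hx hy
  exact hs _ _ hside (hshort (hx u (Sym2.mem_mk_left u v)))
    (hshort (hx v (Sym2.mem_mk_right u v))) (hshort (hy u (Sym2.mem_mk_left u v)))
    (hshort (hy v (Sym2.mem_mk_right u v)))

/-- For a hyperbolic unit disk graph, any enumeration of all edges sorted in
non-increasing order of hyperbolic length is a CNEEO. -/
theorem sorted_edges_isCNEEO {V : Type*} [Fintype V]
    (p : V → UpperHalfPlane) (R : ℝ) (hR : 0 ≤ R)
    (G : SimpleGraph V)
    (hG : ∀ u v, G.Adj u v ↔ u ≠ v ∧ dist (p u) (p v) ≤ R)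
    (L : List (Sym2 V)) (hnd : L.Nodup)
    (hmem : ∀ e, e ∈ L ↔ e ∈ G.edgeSet)
    (hsorted : L.Pairwise fun e f => edgeLen p f ≤ edgeLen p e) :
    IsCNEEO G L :=
  sorted_edges_isCNEEO_general p R G hG L hnd hmem hsorted
end

section
/- Fix α > 1/2 and δ ∈ (0, 1/2]. For all sequences (R_n) and (r_n) of nonnegative reals with R_n → ∞ and (1/2 + δ)·R_n ≤ r_n ≤ R_n for all n, one has J(r_n, R_n) · (π(α − 1/2)/(2α)) · e^{R_n(α − 1/2) − r_n(α − 1)} → 1 as n → ∞, where J(r, R) = (1/(2π)) ∫_0^{2π} ∫_0^{min(r,R)} 1[cosh r · cosh s − sinh r · sinh s · cos φ ≤ cosh R] · (α sinh(α s)/(cosh(α R) − 1)) ds dφ. Equivalently, in the hyperbolic random graph model, for r > R/2, μ(B_r(R) ∩ B_0(r)) = (2α/(π(α − 1/2))) e^{−R(α − 1/2) + r(α − 1)} (1 − o(1)). -/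
open Filter

/-- `hrgJ α r R` is the probability measure `μ(B_r(R) ∩ B_0(r))` in the hyperbolic
random graph model: the probability that a vertex sampled in the disk of radius `R`
(with radial density `α sinh(α s)/(cosh(α R) - 1)` and uniform angle) has radial
coordinate at most `r` and lies within hyperbolic distance `R` of the point `(r, 0)`. -/
noncomputable def hrgJ (α r R : ℝ) : ℝ :=
  (1 / (2 * Real.pi)) * ∫ φ in (0 : ℝ)..(2 * Real.pi), ∫ s in (0 : ℝ)..(min r R),
    if Real.cosh r * Real.cosh s - Real.sinh r * Real.sinh s * Real.cos φ ≤ Real.cosh R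
    then α * Real.sinh (α * s) / (Real.cosh (α * R) - 1) else 0

/-!
Integrating out the angle, `J(r, R) = π⁻¹ ∫₀ʳ θ(s) ρ(s) ds`, where `ρ` is the radial density and
`θ(s) = maxAngle R r s` is the largest angle at which a point of radius `s` lies within distance `R`
of `(r, 0)`. After substituting `s = r - t`, the normalized integrand converges pointwise to the
exponential density `(α - 1/2) e^{-(α - 1/2) t}`, because `θ(r - t) ~ 2 e^{(R - 2r + t)/2}` as
`2r - R → ∞`; the bound `arccos (1 - x) ≤ π √(x/2)` dominates it by a multiple of the same
exponential, so dominated convergence gives the limit `1`.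
-/

open Real MeasureTheory Set Topology intervalIntegral

lemma sinh_le_exp_div_two (x : ℝ) : sinh x ≤ exp x / 2 := by
  rw [sinh_eq]
  linarith [exp_pos (-x)]

lemma exp_div_four_le_sinh {x : ℝ} (hx : 1 ≤ x) : exp x / 4 ≤ sinh x := by
  have hexp : 2 ≤ exp x := by linarith [add_one_le_exp x]
  have hinv : exp (-x) * exp x = 1 := by rw [← exp_add, neg_add_cancel, exp_zero]
  rw [sinh_eq]
  nlinarith [exp_pos (-x)]

lemma cosh_le_exp {x : ℝ} (hx : 0 ≤ x) : cosh x ≤ exp x := by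
  rw [cosh_eq]
  linarith [exp_le_exp.2 (show -x ≤ x by linarith)]

lemma exp_div_four_le_cosh_sub_one {x : ℝ} (hx : 3 ≤ x) : exp x / 4 ≤ cosh x - 1 := by
  rw [cosh_eq]
  linarith [add_one_le_exp x, exp_pos (-x)]

lemma tendsto_sinh_mul_exp_neg_atTop :
    Tendsto (fun x => sinh x * exp (-x)) atTop (𝓝 (1 / 2)) := by
  have h : Tendsto (fun x : ℝ => (1 - exp (-(2 * x))) / 2) atTop (𝓝 (1 / 2)) := by
    simpa using ((tendsto_exp_neg_atTop_nhds_zero.comp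
      (tendsto_id.const_mul_atTop two_pos)).const_sub 1).div_const 2
  refine h.congr fun x => ?_
  rw [sinh_eq, show -(2 * x) = -x + -x by ring, exp_add, exp_neg]
  field_simp

lemma tendsto_cosh_mul_exp_neg_atTop :
    Tendsto (fun x => cosh x * exp (-x)) atTop (𝓝 (1 / 2)) := by
  have h : Tendsto (fun x : ℝ => (1 + exp (-(2 * x))) / 2) atTop (𝓝 (1 / 2)) := by
    simpa using ((tendsto_exp_neg_atTop_nhds_zero.comp
      (tendsto_id.const_mul_atTop two_pos)).const_add 1).div_const 2
  refine h.congr fun x => ?_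
  rw [cosh_eq, show -(2 * x) = -x + -x by ring, exp_add, exp_neg]
  field_simp

lemma tendsto_exp_div_cosh_sub_one_atTop :
    Tendsto (fun x => exp x / (cosh x - 1)) atTop (𝓝 2) := by
  have h : Tendsto (fun x => (cosh x * exp (-x) - exp (-x))⁻¹) atTop (𝓝 2) := by
    simpa using (tendsto_cosh_mul_exp_neg_atTop.sub tendsto_exp_neg_atTop_nhds_zero).inv₀
      (by norm_num)
  refine h.congr fun x => ?_
  rw [← sub_one_mul, mul_inv, exp_neg, inv_inv, div_eq_mul_inv, mul_comm]

lemma le_cos_iff_le_arccos {c φ : ℝ} (hc : c ≤ 1) (hφ₀ : 0 ≤ φ) (hφπ : φ ≤ π) :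
    c ≤ cos φ ↔ φ ≤ arccos c := by
  constructor
  · intro h
    simpa only [arccos_cos hφ₀ hφπ] using arccos_le_arccos h
  · intro h
    rcases le_or_gt c (-1) with hc' | hc'
    · exact hc'.trans (neg_one_le_cos φ)
    · simpa only [cos_arccos hc'.le hc] using
        cos_le_cos_of_nonneg_of_le_pi hφ₀ (arccos_le_pi c) h

lemma arccos_one_sub_le (x : ℝ) : arccos (1 - x) ≤ π * √(x / 2) := by
  rcases le_or_gt x 0 with hx | hx
  · rw [arccos_of_one_le (by linarith)]
    positivity
  set θ := arccos (1 - x)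
  have hθ₀ : 0 ≤ θ := arccos_nonneg _
  have hθπ : θ ≤ π := arccos_le_pi _
  have hcos : 1 - x ≤ cos θ := by
    rcases le_or_gt (-1) (1 - x) with h | h
    · rw [cos_arccos h (by linarith)]
    · rw [show θ = π from arccos_of_le_neg_one h.le, cos_pi]
      exact h.le
  calc θ = π * (2 / π * (θ / 2)) := by field_simp
    _ ≤ π * sin (θ / 2) := by gcongr; exact mul_le_sin (by positivity) (by linarith)
    _ = π * √((1 - cos θ) / 2) := by rw [sin_half_eq_sqrt hθ₀ (by linarith [pi_pos])]
    _ ≤ π * √(x / 2) := by gcongr; linarith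

lemma arccos_one_sub_eq_sqrt_div_sinc {x : ℝ} (hx₀ : 0 < x) (hx₂ : x ≤ 2) :
    arccos (1 - x) = √(2 * x) / sinc (arccos (1 - x) / 2) := by
  set θ := arccos (1 - x)
  have hθ₀ : 0 < θ := arccos_pos.2 (by linarith)
  have hsin : sin (θ / 2) = √(x / 2) := by
    rw [sin_half_eq_sqrt hθ₀.le (by linarith [arccos_le_pi (1 - x), pi_pos]),
      cos_arccos (by linarith) (by linarith), sub_sub_cancel]
  have hsqrt : √(2 * x) = 2 * √(x / 2) := by
    rw [show 2 * x = 2 ^ 2 * (x / 2) by ring, sqrt_mul (by positivity), sqrt_sq zero_le_two]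
  have hpos : 0 < √(x / 2) := sqrt_pos.2 (by positivity)
  rw [sinc_of_ne_zero (by positivity), hsin, hsqrt]
  field_simp

lemma integral_ite_le_cos_zero_pi (c d : ℝ) :
    ∫ φ in (0 : ℝ)..π, (if c ≤ cos φ then d else 0) = arccos c * d := by
  rcases le_or_gt c 1 with hc | hc
  · have hmem : arccos c ∈ Icc 0 π := ⟨arccos_nonneg c, arccos_le_pi c⟩
    rw [integral_congr (g := {φ | φ ≤ arccos c}.indicator fun _ => d), integral_indicator hmem,
      intervalIntegral.integral_const, smul_eq_mul, sub_zero]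
    intro φ hφ
    rw [uIcc_of_le pi_pos.le] at hφ
    simp only [indicator, mem_ofPred_eq, le_cos_iff_le_arccos hc hφ.1 hφ.2]
  · have hfalse : ∀ φ, ¬c ≤ cos φ := fun φ => not_le.2 ((cos_le_one φ).trans_lt hc)
    simp [hfalse, arccos_of_one_le hc.le]

lemma integral_ite_le_cos_zero_two_pi (c d : ℝ) :
    ∫ φ in (0 : ℝ)..2 * π, (if c ≤ cos φ then d else 0) = 2 * arccos c * d := by
  have hint : ∀ a b, IntervalIntegrable (fun φ => if c ≤ cos φ then d else 0) volume a b :=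
    fun a b => (intervalIntegrable_const (c := d)).mono_fun
      (measurable_const.ite (measurableSet_le measurable_const continuous_cos.measurable)
        measurable_const).aestronglyMeasurable
      (.of_forall fun φ => by dsimp only; split_ifs <;> simp)
  have hsecond : ∫ φ in π..2 * π, (if c ≤ cos φ then d else 0) = arccos c * d := by
    have h := integral_comp_sub_left (fun φ => if c ≤ cos φ then d else 0) (2 * π)
      (a := 0) (b := π)
    simp only [cos_two_pi_sub, sub_zero, show 2 * π - π = π by ring] at h
    rw [← h, integral_ite_le_cos_zero_pi]
  rw [← integral_add_adjacent_intervals (hint 0 π) (hint π (2 * π)),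
    integral_ite_le_cos_zero_pi, hsecond]
  ring

lemma intervalIntegral_integral_swap_of_abs_le {f : ℝ → ℝ → ℝ} {g : ℝ → ℝ} {a b c d : ℝ}
    (hab : a ≤ b) (hcd : c ≤ d) (hf : Measurable (Function.uncurry f)) (hg : Continuous g)
    (hfg : ∀ x y, |f x y| ≤ g y) :
    ∫ x in a..b, ∫ y in c..d, f x y = ∫ y in c..d, ∫ x in a..b, f x y := by
  simp only [integral_of_le hab, integral_of_le hcd]
  exact integral_integral_swap <|
    (hg.integrableOn_Ioc.comp_snd _).mono' hf.aestronglyMeasurable (.of_forall fun p => hfg p.1 p.2)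

noncomputable def radialDensity (α R s : ℝ) : ℝ := α * sinh (α * s) / (cosh (α * R) - 1)

/-- For `r, s > 0` with `|r - s| ≤ R` and `φ ∈ [0, π]`, the points with polar coordinates `(r, 0)`
and `(s, φ)` are at hyperbolic distance at most `R` iff `φ ≤ maxAngle R r s`. -/
noncomputable def maxAngle (R r s : ℝ) : ℝ :=
  arccos ((cosh r * cosh s - cosh R) / (sinh r * sinh s))

lemma hrgJ_eq_integral_maxAngle (α : ℝ) {r R : ℝ} (hr : 0 ≤ r) (hrR : r ≤ R) :
    hrgJ α r R = π⁻¹ * ∫ s in (0 : ℝ)..r, maxAngle R r s * radialDensity α R s := by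
  set F : ℝ → ℝ → ℝ := fun φ s =>
    if cosh r * cosh s - sinh r * sinh s * cos φ ≤ cosh R then radialDensity α R s else 0
  have hswap : ∫ φ in (0 : ℝ)..2 * π, ∫ s in (0 : ℝ)..r, F φ s =
      ∫ s in (0 : ℝ)..r, ∫ φ in (0 : ℝ)..2 * π, F φ s := by
    refine intervalIntegral_integral_swap_of_abs_le (by positivity) hr ?_
      (g := fun s => |radialDensity α R s|) (by unfold radialDensity; fun_prop) ?_
    · exact Measurable.ite (measurableSet_le (by fun_prop) measurable_const)
        (by unfold radialDensity; fun_prop) measurable_const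
    · intro φ s
      dsimp only [F]
      split_ifs <;> simp
  have hinner : ∀ s ∈ Ioc 0 r,
      ∫ φ in (0 : ℝ)..2 * π, F φ s = 2 * maxAngle R r s * radialDensity α R s := by
    intro s hs
    have hpos : 0 < sinh r * sinh s :=
      mul_pos (sinh_pos_iff.2 (hs.1.trans_le hs.2)) (sinh_pos_iff.2 hs.1)
    rw [maxAngle, ← integral_ite_le_cos_zero_two_pi]
    refine integral_congr fun φ _ => if_congr ?_ rfl rfl
    rw [div_le_iff₀ hpos]
    constructor <;> intro h <;> linarith
  calc hrgJ α r R = 1 / (2 * π) * ∫ φ in (0 : ℝ)..2 * π, ∫ s in (0 : ℝ)..r, F φ s := by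
        rw [hrgJ, min_eq_left hrR]; rfl
    _ = 1 / (2 * π) * ∫ s in (0 : ℝ)..r, 2 * (maxAngle R r s * radialDensity α R s) := by
        rw [hswap]
        congr 1
        refine integral_congr_ae (.of_forall fun s hs => ?_)
        rw [uIoc_of_le hr] at hs
        rw [hinner s hs, mul_assoc]
    _ = π⁻¹ * ∫ s in (0 : ℝ)..r, maxAngle R r s * radialDensity α R s := by
        rw [intervalIntegral.integral_const_mul]
        field_simp

lemma maxAngle_eq_arccos_one_sub {R r s : ℝ} (h : sinh r * sinh s ≠ 0) :
    maxAngle R r s = arccos (1 - (cosh R - cosh (r - s)) / (sinh r * sinh s)) := by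
  rw [maxAngle, one_sub_div h, cosh_sub]
  congr 2
  ring

lemma maxAngle_nonneg (R r s : ℝ) : 0 ≤ maxAngle R r s := arccos_nonneg _

lemma maxAngle_le {R r s : ℝ} (hsr : s ≤ r) (hrR : r ≤ R) :
    maxAngle R r s ≤ 3 * π * exp ((R - r - s) / 2) := by
  suffices h : maxAngle R r s ≤ π * (3 * exp ((R - r - s) / 2)) by linarith
  rcases lt_or_ge s 1 with hs | hs
  · calc maxAngle R r s ≤ π * 1 := by rw [mul_one]; exact arccos_le_pi _
      _ ≤ π * (3 * exp ((R - r - s) / 2)) := by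
          gcongr; linarith [add_one_le_exp ((R - r - s) / 2)]
  have hsinh : exp r / 4 * (exp s / 4) ≤ sinh r * sinh s :=
    mul_le_mul (exp_div_four_le_sinh (hs.trans hsr)) (exp_div_four_le_sinh hs)
      (by positivity) (sinh_nonneg_iff.2 (by linarith))
  have hx : (cosh R - cosh (r - s)) / (sinh r * sinh s) / 2 ≤ (3 * exp ((R - r - s) / 2)) ^ 2 :=
    calc (cosh R - cosh (r - s)) / (sinh r * sinh s) / 2
        ≤ exp R / (exp r / 4 * (exp s / 4)) / 2 := by
          gcongr
          linarith [cosh_le_exp (show 0 ≤ R by linarith), one_le_cosh (r - s)]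
      _ = 8 * exp (R - r - s) := by
          rw [exp_sub, exp_sub]; field_simp; ring
      _ ≤ (3 * exp ((R - r - s) / 2)) ^ 2 := by
          rw [mul_pow, sq (exp _), ← exp_add, add_halves]
          linarith [exp_pos (R - r - s)]
  have hpos : 0 < sinh r * sinh s :=
    mul_pos (sinh_pos_iff.2 (by linarith)) (sinh_pos_iff.2 (by linarith))
  rw [maxAngle_eq_arccos_one_sub hpos.ne']
  exact (arccos_one_sub_le _).trans (by gcongr; exact sqrt_le_iff.2 ⟨by positivity, hx⟩)

lemma radialDensity_nonneg {α R s : ℝ} (hα : 0 ≤ α) (hs : 0 ≤ s) :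
    0 ≤ radialDensity α R s :=
  div_nonneg (mul_nonneg hα (sinh_nonneg_iff.2 (mul_nonneg hα hs)))
    (sub_nonneg.2 (one_le_cosh _))

lemma radialDensity_le {α R : ℝ} (hα : 0 ≤ α) (hαR : 3 ≤ α * R) (s : ℝ) :
    radialDensity α R s ≤ 2 * α * exp (α * (s - R)) := by
  have hcosh := exp_div_four_le_cosh_sub_one hαR
  rw [radialDensity, div_le_iff₀ (by linarith [exp_pos (α * R)])]
  calc α * sinh (α * s) ≤ α * (exp (α * s) / 2) := by gcongr; exact sinh_le_exp_div_two _
    _ = 2 * α * exp (α * (s - R)) * (exp (α * R) / 4) := by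
        rw [mul_sub, exp_sub]; field_simp; ring
    _ ≤ 2 * α * exp (α * (s - R)) * (cosh (α * R) - 1) := by gcongr

noncomputable def normalizedIntegrand (α r R t : ℝ) : ℝ :=
  (α - 1 / 2) / (2 * α) * exp (R * (α - 1 / 2) - r * (α - 1)) *
    (maxAngle R r (r - t) * radialDensity α R (r - t))

lemma hrgJ_mul_exp_eq_integral (α : ℝ) {r R : ℝ} (hr : 0 ≤ r) (hrR : r ≤ R) :
    hrgJ α r R * (π * (α - 1 / 2) / (2 * α)) * exp (R * (α - 1 / 2) - r * (α - 1)) =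
      ∫ t in (0 : ℝ)..r, normalizedIntegrand α r R t := by
  have hsub := integral_comp_sub_left (fun s => maxAngle R r s * radialDensity α R s) r
    (a := 0) (b := r)
  simp only [sub_zero, sub_self] at hsub
  rw [hrgJ_eq_integral_maxAngle α hr hrR]
  simp only [normalizedIntegrand]
  rw [intervalIntegral.integral_const_mul, hsub]
  field_simp

lemma measurable_normalizedIntegrand (α r R : ℝ) : Measurable (normalizedIntegrand α r R) := by
  unfold normalizedIntegrand maxAngle radialDensity
  fun_prop

lemma normalizedIntegrand_nonneg {α r R t : ℝ} (hα : 1 / 2 < α) (htr : t ≤ r) :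
    0 ≤ normalizedIntegrand α r R t :=
  mul_nonneg (mul_nonneg (div_nonneg (by linarith) (by linarith)) (exp_nonneg _))
    (mul_nonneg (maxAngle_nonneg _ _ _) (radialDensity_nonneg (by linarith) (by linarith)))

lemma normalizedIntegrand_le {α r R t : ℝ} (hα : 1 / 2 < α) (hαR : 3 ≤ α * R) (hrR : r ≤ R)
    (ht : 0 ≤ t) (htr : t ≤ r) :
    normalizedIntegrand α r R t ≤ 3 * π * (α - 1 / 2) * exp (-(α - 1 / 2) * t) := by
  have hα₀ : 0 ≤ α := by linarith
  have hprod : maxAngle R r (r - t) * radialDensity α R (r - t) ≤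
      3 * π * exp ((R - r - (r - t)) / 2) * (2 * α * exp (α * (r - t - R))) :=
    mul_le_mul (maxAngle_le (by linarith) hrR) (radialDensity_le hα₀ hαR _)
      (radialDensity_nonneg hα₀ (by linarith)) (by positivity)
  calc normalizedIntegrand α r R t
      ≤ (α - 1 / 2) / (2 * α) * exp (R * (α - 1 / 2) - r * (α - 1)) *
          (3 * π * exp ((R - r - (r - t)) / 2) * (2 * α * exp (α * (r - t - R)))) :=
        mul_le_mul_of_nonneg_left hprod
          (mul_nonneg (div_nonneg (by linarith) (by linarith)) (exp_nonneg _))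
    _ = 3 * π * (α - 1 / 2) * exp (-(α - 1 / 2) * t) := by
        rw [show -(α - 1 / 2) * t = R * (α - 1 / 2) - r * (α - 1) + (R - r - (r - t)) / 2 +
          α * (r - t - R) by ring, exp_add, exp_add]
        field_simp

section Asymptotics

variable {ι : Type*} {l : Filter ι} {R r : ι → ℝ}

lemma tendsto_atTop_of_tendsto_two_mul_sub (hgap : Tendsto (fun i => 2 * r i - R i) l atTop)
    (hrR : ∀ᶠ i in l, r i ≤ R i) : Tendsto r l atTop :=
  tendsto_atTop_mono' l (hrR.mono fun i h => by linarith) hgap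

lemma tendsto_cosh_sub_div_sinh_mul_sinh_mul_exp (hR : Tendsto R l atTop)
    (hr : Tendsto r l atTop) (t : ℝ) :
    Tendsto (fun i => (cosh (R i) - cosh t) / (sinh (r i) * sinh (r i - t)) *
      exp (2 * r i - t - R i)) l (𝓝 2) := by
  have hnum : Tendsto (fun i => cosh (R i) * exp (-R i) - cosh t * exp (-R i)) l
      (𝓝 (1 / 2)) := by
    simpa using (tendsto_cosh_mul_exp_neg_atTop.comp hR).sub
      ((tendsto_exp_neg_atTop_nhds_zero.comp hR).const_mul (cosh t))
  have hden : Tendsto (fun i => sinh (r i) * exp (-r i) * (sinh (r i - t) * exp (-(r i - t))))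
      l (𝓝 (1 / 2 * (1 / 2))) :=
    (tendsto_sinh_mul_exp_neg_atTop.comp hr).mul
      (tendsto_sinh_mul_exp_neg_atTop.comp (tendsto_atTop_add_const_right l (-t) hr))
  have h := hnum.div hden (by norm_num)
  rw [show (1 / 2 : ℝ) / (1 / 2 * (1 / 2)) = 2 by norm_num] at h
  refine h.congr fun i => ?_
  rw [Pi.div_apply, ← sub_mul, mul_mul_mul_comm, mul_div_mul_comm, ← exp_add, ← exp_sub]
  congr 2
  ring

lemma tendsto_maxAngle_mul_exp (hgap : Tendsto (fun i => 2 * r i - R i) l atTop)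
    (hrR : ∀ᶠ i in l, r i ≤ R i) (t : ℝ) :
    Tendsto (fun i => maxAngle (R i) (r i) (r i - t) * exp ((2 * r i - t - R i) / 2)) l
      (𝓝 2) := by
  have hr := tendsto_atTop_of_tendsto_two_mul_sub hgap hrR
  have hR : Tendsto R l atTop := tendsto_atTop_mono' l hrR hr
  set x := fun i => (cosh (R i) - cosh t) / (sinh (r i) * sinh (r i - t))
  have hxe : Tendsto (fun i => x i * exp (2 * r i - t - R i)) l (𝓝 2) :=
    tendsto_cosh_sub_div_sinh_mul_sinh_mul_exp hR hr t
  have hx₀ : Tendsto x l (𝓝 0) := by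
    have hdecay : Tendsto (fun i => exp (-(2 * r i - t - R i))) l (𝓝 0) :=
      tendsto_exp_neg_atTop_nhds_zero.comp
        ((tendsto_atTop_add_const_right l (-t) hgap).congr fun i => by ring)
    have h := hxe.mul hdecay
    rw [mul_zero] at h
    refine h.congr fun i => ?_
    rw [mul_assoc, ← exp_add, add_neg_cancel, exp_zero, mul_one]
  have hpos : ∀ᶠ i in l, 0 < sinh (r i) * sinh (r i - t) ∧ 0 < x i := by
    filter_upwards [hr.eventually_gt_atTop (max t 0), hR.eventually_gt_atTop |t|]
      with i hri hRi
    have hden : 0 < sinh (r i) * sinh (r i - t) := mul_pos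
      (sinh_pos_iff.2 (lt_of_le_of_lt (le_max_right _ _) hri))
      (sinh_pos_iff.2 (by linarith [le_max_left t 0]))
    refine ⟨hden, div_pos (sub_pos.2 (cosh_lt_cosh.2 ?_)) hden⟩
    rwa [abs_of_pos ((abs_nonneg t).trans_lt hRi)]
  have hθ : Tendsto (fun i => arccos (1 - x i)) l (𝓝 0) := by
    simpa using (tendsto_const_nhds.sub hx₀).arccos (x := (1 : ℝ) - 0)
  have hsinc : Tendsto (fun i => sinc (arccos (1 - x i) / 2)) l (𝓝 1) := by
    have h := hθ.div_const 2
    rw [zero_div] at h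
    have hcomp := (continuous_sinc.tendsto 0).comp h
    rwa [sinc_zero] at hcomp
  have hsqrt : Tendsto (fun i => √(2 * (x i * exp (2 * r i - t - R i)))) l (𝓝 2) := by
    have h := (hxe.const_mul 2).sqrt
    rwa [show (2 : ℝ) * 2 = 2 ^ 2 by norm_num, sqrt_sq zero_le_two] at h
  have h := hsqrt.div hsinc one_ne_zero
  rw [div_one] at h
  refine h.congr' ?_
  filter_upwards [hpos, hx₀.eventually_le_const (show (0 : ℝ) < 2 by norm_num)]
    with i ⟨hden, hxi⟩ hx₂
  rw [Pi.div_apply, maxAngle_eq_arccos_one_sub hden.ne', sub_sub_cancel, ← mul_assoc,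
    sqrt_mul (by positivity), ← exp_half]
  conv_rhs => rw [arccos_one_sub_eq_sqrt_div_sinc hxi hx₂]
  ring

lemma tendsto_normalizedIntegrand {α : ℝ} (hα : 0 < α)
    (hgap : Tendsto (fun i => 2 * r i - R i) l atTop) (hrR : ∀ᶠ i in l, r i ≤ R i) (t : ℝ) :
    Tendsto (fun i => normalizedIntegrand α (r i) (R i) t) l
      (𝓝 ((α - 1 / 2) * exp (-(α - 1 / 2) * t))) := by
  have hr := tendsto_atTop_of_tendsto_two_mul_sub hgap hrR
  have hR : Tendsto R l atTop := tendsto_atTop_mono' l hrR hr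
  have h := ((((tendsto_maxAngle_mul_exp hgap hrR t).const_mul ((α - 1 / 2) / 2)).mul
    (tendsto_sinh_mul_exp_neg_atTop.comp
      ((tendsto_atTop_add_const_right l (-t) hr).const_mul_atTop hα))).mul
    (tendsto_exp_div_cosh_sub_one_atTop.comp (hR.const_mul_atTop hα))).mul_const
    (exp (-(α - 1 / 2) * t))
  rw [show (α - 1 / 2) / 2 * 2 * (1 / 2) * 2 * exp (-(α - 1 / 2) * t) =
    (α - 1 / 2) * exp (-(α - 1 / 2) * t) by ring] at h
  refine h.congr fun i => ?_
  simp only [Function.comp_apply, ← sub_eq_add_neg, normalizedIntegrand, radialDensity]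
  rw [show R i * (α - 1 / 2) - r i * (α - 1) = (2 * r i - t - R i) / 2 +
    -(α * (r i - t)) + α * R i + -(α - 1 / 2) * t by ring, exp_add, exp_add, exp_add]
  field_simp

lemma tendsto_integral_normalizedIntegrand [l.IsCountablyGenerated] {α : ℝ} (hα : 1 / 2 < α)
    (hgap : Tendsto (fun i => 2 * r i - R i) l atTop) (hrR : ∀ᶠ i in l, r i ≤ R i) :
    Tendsto (fun i => ∫ t in (0 : ℝ)..r i, normalizedIntegrand α (r i) (R i) t) l (𝓝 1) := by
  have hα' : 0 < α - 1 / 2 := by linarith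
  have hr := tendsto_atTop_of_tendsto_two_mul_sub hgap hrR
  have hR : Tendsto R l atTop := tendsto_atTop_mono' l hrR hr
  have hlimit : ∫ t in Ioi 0, (α - 1 / 2) * exp (-(α - 1 / 2) * t) = 1 := by
    rw [MeasureTheory.integral_const_mul, integral_exp_mul_Ioi (by linarith) 0, mul_zero,
      exp_zero, neg_div_neg_eq, mul_one_div_cancel hα'.ne']
  have hindicator : ∀ᶠ i in l,
      ∫ t in Ioi 0, (Ioc 0 (r i)).indicator (normalizedIntegrand α (r i) (R i)) t =
        ∫ t in (0 : ℝ)..r i, normalizedIntegrand α (r i) (R i) t := by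
    filter_upwards [hr.eventually_ge_atTop 0] with i hi
    rw [integral_of_le hi, MeasureTheory.integral_indicator measurableSet_Ioc,
      Measure.restrict_restrict measurableSet_Ioc,
      inter_eq_self_of_subset_left Ioc_subset_Ioi_self]
  rw [← hlimit]
  refine (tendsto_integral_filter_of_dominated_convergence
    (fun t => 3 * π * (α - 1 / 2) * exp (-(α - 1 / 2) * t))
    (.of_forall fun i =>
      ((measurable_normalizedIntegrand α _ _).indicator measurableSet_Ioc).aestronglyMeasurable)
    ?_ ((integrableOn_exp_mul_Ioi (by linarith) 0).const_mul _) ?_).congr' hindicator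
  · filter_upwards [(hR.const_mul_atTop (by linarith : 0 < α)).eventually_ge_atTop 3, hrR]
      with i hαR hrRi
    filter_upwards [ae_restrict_mem measurableSet_Ioi] with t ht
    by_cases htr : t ∈ Ioc 0 (r i)
    · rw [indicator_of_mem htr, norm_of_nonneg (normalizedIntegrand_nonneg hα htr.2)]
      exact normalizedIntegrand_le hα hαR hrRi ht.le htr.2
    · rw [indicator_of_notMem htr, norm_zero]
      positivity
  · filter_upwards [ae_restrict_mem measurableSet_Ioi] with t ht
    refine (tendsto_normalizedIntegrand (by linarith) hgap hrR t).congr' ?_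
    filter_upwards [hr.eventually_ge_atTop t] with i hi
    rw [indicator_of_mem (show t ∈ Ioc 0 (r i) from ⟨ht, hi⟩)]

end Asymptotics

theorem measure_ball_inter_inner_disk_asymptotic_general (α δ : ℝ) (hα : 1 / 2 < α)
    (hδ0 : 0 < δ)
    (R r : ℕ → ℝ) (hrnn : ∀ n, 0 ≤ r n)
    (hR : Tendsto R atTop atTop)
    (hlow : ∀ n, (1 / 2 + δ) * R n ≤ r n) (hhigh : ∀ n, r n ≤ R n) :
    Tendsto (fun n =>
        hrgJ α (r n) (R n) * (Real.pi * (α - 1 / 2) / (2 * α)) *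
          Real.exp (R n * (α - 1 / 2) - r n * (α - 1)))
      atTop (nhds 1) := by
  have hgap : Tendsto (fun n => 2 * r n - R n) atTop atTop :=
    tendsto_atTop_mono (fun n => by linarith [hlow n])
      (hR.const_mul_atTop (by linarith : 0 < 2 * δ))
  refine (tendsto_integral_normalizedIntegrand hα hgap (.of_forall hhigh)).congr fun n => ?_
  exact (hrgJ_mul_exp_eq_integral α (hrnn n) (hhigh n)).symm

/-- For `r > R/2`, `μ(B_r(R) ∩ B_0(r)) = (2α/(π(α - 1/2))) e^{-R(α-1/2) + r(α-1)} (1 - o(1))`: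
for sequences `R_n → ∞` and `(1/2 + δ) R_n ≤ r_n ≤ R_n`, the normalized quantity
`J(r_n, R_n) · (π(α - 1/2)/(2α)) · e^{R_n(α - 1/2) - r_n(α - 1)}` tends to `1`. -/
theorem measure_ball_inter_inner_disk_asymptotic (α δ : ℝ) (hα : 1 / 2 < α)
    (hδ0 : 0 < δ) (hδ1 : δ ≤ 1 / 2)
    (R r : ℕ → ℝ) (hRnn : ∀ n, 0 ≤ R n) (hrnn : ∀ n, 0 ≤ r n)
    (hR : Tendsto R atTop atTop)
    (hlow : ∀ n, (1 / 2 + δ) * R n ≤ r n) (hhigh : ∀ n, r n ≤ R n) :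
    Tendsto (fun n =>
        hrgJ α (r n) (R n) * (Real.pi * (α - 1 / 2) / (2 * α)) *
          Real.exp (R n * (α - 1 / 2) - r n * (α - 1)))
      atTop (nhds 1) :=
  measure_ball_inter_inner_disk_asymptotic_general α δ hα hδ0 R r hrnn hR hlow hhigh
end
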